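/- arXiv:1607.07080 — 6 statements merged into one kernel-verified Lean document; each statement's English description precedes it below -/
import Mathlib

section
/- Let A⁻ ≤ A⁺ be two d×d Metzler matrices (all off-diagonal entries nonnegative). Then every matrix M with A⁻ ≤ M ≤ A⁺ (entrywise) is Hurwitz stable (all eigenvalues have negative real part) if and only if A⁺ is Hurwitz stable. -/
open Matrix

variable {d : ℕ}

/-- A real square matrix is Metzler if all its off-diagonal entries are nonnegative. -/
def Metzler (M : Matrix (Fin d) (Fin d) ℝ) : Prop :=
  ∀ i j, i ≠ j → 0 ≤ M i j

/-- A real square matrix is Hurwitz stable if all its (complex) eigenvalues,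
i.e. all roots of its characteristic polynomial, have strictly negative real part. -/
def IsHurwitz (M : Matrix (Fin d) (Fin d) ℝ) : Prop :=
  ∀ z : ℂ, (M.map (Complex.ofReal)).charpoly.IsRoot z → z.re < 0

/-- The directed graph associated with a matrix: edge from `m` to `n` iff `m ≠ n`
and the `(n, m)` entry of `M` is nonzero. -/
def edgeRel (M : Matrix (Fin d) (Fin d) ℝ) (m n : Fin d) : Prop :=
  m ≠ n ∧ M n m ≠ 0

/-!
If `Ap` is Metzler and Hurwitz, then for large `c` the matrix `P = 1 + c⁻¹ • Ap` is entrywise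
nonnegative with spectrum inside the open unit disc, so `P ^ k → 0` and a truncated Neumann series
`x = ∑_{k<N} P ^ k *ᵥ 1` is a positive vector with `P *ᵥ x < x`, i.e. `Ap *ᵥ x < 0`.
For a Metzler `M ≤ Ap`, Gershgorin's theorem for `M` rescaled by the weights `x` puts each
eigenvalue `z` within `∑_{j ≠ k} M k j * x j / x k` of some `M k k`, whence
`z.re * x k ≤ (M *ᵥ x) k ≤ (Ap *ᵥ x) k < 0`.
-/

open Filter Topology

theorem tendsto_pow_atTop_nhds_zero_of_forall_norm_lt_one {A : Type*} [NormedRing A]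
    [NormedAlgebra ℂ A] [CompleteSpace A] (a : A) (h : ∀ z ∈ spectrum ℂ a, ‖z‖ < 1) :
    Tendsto (a ^ ·) atTop (𝓝 0) := by
  rcases subsingleton_or_nontrivial A with hA | hA
  · simp [Subsingleton.elim _ (0 : A)]
  have hρ : spectralRadius ℂ a < (1 : NNReal) :=
    spectrum.spectralRadius_lt_of_forall_lt a fun z hz => by exact_mod_cast h z hz
  obtain ⟨r, hρr, hr1⟩ := ENNReal.lt_iff_exists_nnreal_btwn.mp hρ
  rw [ENNReal.coe_lt_coe] at hr1
  -- Gelfand's formula: eventually `‖a ^ n‖ ^ (1 / n) < r`.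
  have hbound : ∀ᶠ n : ℕ in atTop, ‖a ^ n‖ ≤ (r : ℝ) ^ n := by
    filter_upwards [(spectrum.pow_nnnorm_pow_one_div_tendsto_nhds_spectralRadius a)
      |>.eventually_lt_const hρr, eventually_ge_atTop 1] with n hn hn1
    have hn0 : (n : ℝ) ≠ 0 := by positivity
    have := ENNReal.rpow_lt_rpow hn (by positivity : (0 : ℝ) < n)
    rw [← ENNReal.rpow_mul, one_div, inv_mul_cancel₀ hn0, ENNReal.rpow_one,
      ENNReal.rpow_natCast, ← ENNReal.coe_pow, ENNReal.coe_lt_coe] at this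
    exact_mod_cast this.le
  exact squeeze_zero_norm' hbound (tendsto_pow_atTop_nhds_zero_of_lt_one r.2 hr1)

open Pointwise in
theorem spectrum.one_add_smul_eq_image {𝕜 A : Type*} [Field 𝕜] [Ring A] [Algebra 𝕜 A] (a : A)
    {k : 𝕜} (hk : k ≠ 0) : spectrum 𝕜 (1 + k • a) = (fun w => 1 + k * w) '' spectrum 𝕜 a := by
  have hsmul := spectrum.unit_smul_eq_smul a (Units.mk0 k hk)
  rw [Units.smul_mk0, Units.smul_mk0] at hsmul
  rw [← map_one (algebraMap 𝕜 A), ← spectrum.singleton_add_eq, hsmul, Set.singleton_add,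
    ← Set.image_smul, Set.image_image]
  rfl

theorem Complex.eventually_norm_one_add_inv_mul_lt_one {w : ℂ} (hw : w.re < 0) :
    ∀ᶠ c : ℝ in atTop, ‖1 + (c : ℂ)⁻¹ * w‖ < 1 := by
  filter_upwards [eventually_gt_atTop (Complex.normSq w / (-2 * w.re))] with c hc
  have hc0 : 0 < c := lt_of_le_of_lt (div_nonneg (Complex.normSq_nonneg w) (by linarith)) hc
  have hc' : c⁻¹ * Complex.normSq w < -2 * w.re := by
    rw [inv_mul_lt_iff₀ hc0]; exact (div_lt_iff₀ (by linarith)).mp hc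
  refine (sq_lt_one_iff₀ (norm_nonneg _)).mp ?_
  rw [Complex.sq_norm, ← Complex.ofReal_inv, Complex.normSq_apply]
  rw [Complex.normSq_apply] at hc'
  simp only [Complex.add_re, Complex.add_im, Complex.one_re, Complex.one_im,
    Complex.re_ofReal_mul, Complex.im_ofReal_mul]
  nlinarith [mul_lt_mul_of_pos_left hc' (inv_pos.mpr hc0)]

theorem eigenvalue_mem_ball_of_weights {K n : Type*} [NormedField K] [Fintype n] [DecidableEq n]
    {A : Matrix n n K} {μ : K} (hμ : A.charpoly.IsRoot μ) {w : n → K} (hw : ∀ i, w i ≠ 0) :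
    ∃ k, μ ∈ Metric.closedBall (A k k) (∑ j ∈ Finset.univ.erase k, ‖A k j‖ * ‖w j‖ / ‖w k‖) := by
  have hB : (diagonal w⁻¹ * A * diagonal w).charpoly = A.charpoly := by
    rw [mul_assoc, charpoly_mul_comm, mul_assoc, diagonal_mul_diagonal]
    simp [hw]
  have hμB : Module.End.HasEigenvalue (toLin' (diagonal w⁻¹ * A * diagonal w)) μ := by
    rwa [Module.End.hasEigenvalue_iff_mem_spectrum, spectrum_toLin',
      mem_spectrum_iff_isRoot_charpoly, hB]
  obtain ⟨k, hk⟩ := eigenvalue_mem_ball hμB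
  refine ⟨k, ?_⟩
  convert hk using 2
  · simp only [diagonal_mul, mul_diagonal, Pi.inv_apply]
    field_simp [hw k]
  · refine Finset.sum_congr rfl fun j _ => ?_
    simp only [diagonal_mul, mul_diagonal, Pi.inv_apply, norm_mul, norm_inv]
    ring

namespace Matrix

variable {n : Type*} [Fintype n] [DecidableEq n]

theorem tendsto_pow_of_tendsto_pow_map_ofReal {P : Matrix n n ℝ}
    (h : Tendsto (fun k => P.map Complex.ofReal ^ k) atTop (𝓝 0)) :
    Tendsto (P ^ ·) atTop (𝓝 0) := by
  have hpow : ∀ k, (P.map Complex.ofReal ^ k).map Complex.re = P ^ k := fun k => by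
    rw [show P.map Complex.ofReal = Complex.ofRealHom.mapMatrix P from rfl, ← map_pow]
    ext; simp
  simpa [Function.comp_def, hpow] using
    ((continuous_id.matrix_map Complex.continuous_re).tendsto 0).comp h

theorem exists_pos_mulVec_lt_of_tendsto_pow {P : Matrix n n ℝ} (hP : ∀ i j, 0 ≤ P i j)
    (hlim : Tendsto (P ^ ·) atTop (𝓝 0)) :
    ∃ x : n → ℝ, (∀ i, 0 < x i) ∧ ∀ i, (P *ᵥ x) i < x i := by
  have hvec : Tendsto (fun k => P ^ k *ᵥ 1) atTop (𝓝 0) := by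
    simpa [Function.comp_def] using
      ((continuous_id.matrix_mulVec continuous_const).tendsto 0).comp hlim
  obtain ⟨N, hN⟩ : ∃ N, ∀ i, (P ^ N *ᵥ 1) i < 1 :=
    (eventually_all.mpr fun i =>
      (tendsto_pi_nhds.mp hvec i).eventually_lt_const zero_lt_one).exists
  set S := ∑ k ∈ Finset.range N, P ^ k with hS_def
  have hS : ∀ i j, 0 ≤ S i j := fun i j => by
    rw [hS_def, sum_apply]; exact Finset.sum_nonneg fun k _ => pow_apply_nonneg hP k i j
  have hS_mulVec : S *ᵥ 1 - P *ᵥ (S *ᵥ 1) = 1 - P ^ N *ᵥ 1 := by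
    have : S - P * S = 1 - P ^ N := by rw [← mul_neg_geom_sum, sub_mul, one_mul]
    rw [mulVec_mulVec, ← sub_mulVec, this, sub_mulVec, one_mulVec]
  have hlt : ∀ i, (P *ᵥ (S *ᵥ 1)) i < (S *ᵥ 1) i := fun i => by
    have := congrFun hS_mulVec i
    simp only [Pi.sub_apply, Pi.one_apply] at this
    linarith [hN i]
  refine ⟨S *ᵥ 1, fun i => lt_of_le_of_lt ?_ (hlt i), hlt⟩
  exact Finset.sum_nonneg fun j _ => mul_nonneg (hP i j)
    (Finset.sum_nonneg fun l _ => mul_nonneg (hS j l) zero_le_one)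

end Matrix

theorem IsHurwitz.eventually_spectrum_one_add_inv_smul {A : Matrix (Fin d) (Fin d) ℝ}
    (hA : IsHurwitz A) :
    ∀ᶠ c : ℝ in atTop, ∀ z ∈ spectrum ℂ ((1 + c⁻¹ • A).map Complex.ofReal), ‖z‖ < 1 := by
  have hroots : ∀ᶠ c : ℝ in atTop, ∀ w ∈ spectrum ℂ (A.map Complex.ofReal),
      ‖1 + (c : ℂ)⁻¹ * w‖ < 1 :=
    (eventually_all_finite (finite_spectrum _)).mpr fun w hw =>
      Complex.eventually_norm_one_add_inv_mul_lt_one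
        (hA w (mem_spectrum_iff_isRoot_charpoly.mp hw))
  filter_upwards [hroots, eventually_gt_atTop 0] with c hc hc0
  have hmap : (1 + c⁻¹ • A).map Complex.ofReal = 1 + (c : ℂ)⁻¹ • A.map Complex.ofReal := by
    ext i j; by_cases h : i = j <;> simp [h]
  rw [hmap, spectrum.one_add_smul_eq_image _ (inv_ne_zero (Complex.ofReal_ne_zero.mpr hc0.ne'))]
  rintro _ ⟨w, hw, rfl⟩
  exact hc w hw

theorem Metzler.eventually_one_add_inv_smul_nonneg {A : Matrix (Fin d) (Fin d) ℝ}
    (hA : Metzler A) : ∀ᶠ c : ℝ in atTop, ∀ i j, 0 ≤ (1 + c⁻¹ • A) i j := by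
  have hdiag : ∀ᶠ c : ℝ in atTop, ∀ i, -A i i ≤ c :=
    eventually_all.mpr fun i => eventually_ge_atTop _
  filter_upwards [hdiag, eventually_gt_atTop 0] with c hc hc0 i j
  rcases eq_or_ne i j with rfl | hij
  · have : 1 + c⁻¹ * A i i = c⁻¹ * (c + A i i) := by field_simp
    simpa [this] using mul_nonneg (inv_pos.mpr hc0).le (neg_le_iff_add_nonneg.mp (hc i))
  · simpa [hij] using mul_nonneg (inv_pos.mpr hc0).le (hA i j hij)

section

-- Any Banach-algebra norm on the complex matrices serves for Gelfand's formula.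
attribute [local instance] Matrix.linftyOpNormedAddCommGroup Matrix.linftyOpNormedRing
  Matrix.linftyOpNormedAlgebra

theorem Metzler.exists_pos_mulVec_neg_of_isHurwitz {A : Matrix (Fin d) (Fin d) ℝ}
    (hA : Metzler A) (hH : IsHurwitz A) :
    ∃ x : Fin d → ℝ, (∀ i, 0 < x i) ∧ ∀ i, (A *ᵥ x) i < 0 := by
  obtain ⟨c, hc0, hP, hσ⟩ := ((eventually_gt_atTop 0).and
    (hA.eventually_one_add_inv_smul_nonneg.and hH.eventually_spectrum_one_add_inv_smul)).exists
  obtain ⟨x, hx, hPx⟩ := exists_pos_mulVec_lt_of_tendsto_pow hP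
    (tendsto_pow_of_tendsto_pow_map_ofReal (tendsto_pow_atTop_nhds_zero_of_forall_norm_lt_one _ hσ))
  refine ⟨x, hx, fun i => ?_⟩
  have hAx : (A *ᵥ x) i = c * (((1 + c⁻¹ • A) *ᵥ x) i - x i) := by
    simp only [add_mulVec, one_mulVec, smul_mulVec, Pi.add_apply, Pi.smul_apply, smul_eq_mul]
    field_simp
    ring
  rw [hAx]
  exact mul_neg_of_pos_of_neg hc0 (sub_neg.mpr (hPx i))

end

theorem Metzler.isHurwitz_of_le_of_mulVec_neg {M A : Matrix (Fin d) (Fin d) ℝ} (hM : Metzler M)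
    (hMA : ∀ i j, M i j ≤ A i j) {x : Fin d → ℝ} (hx : ∀ i, 0 < x i)
    (hAx : ∀ i, (A *ᵥ x) i < 0) : IsHurwitz M := by
  intro z hz
  obtain ⟨k, hk⟩ := eigenvalue_mem_ball_of_weights hz (w := fun i => (x i : ℂ))
    fun i => Complex.ofReal_ne_zero.mpr (hx i).ne'
  rw [mem_closedBall_iff_norm] at hk
  have hre : z.re - M k k ≤ ∑ j ∈ Finset.univ.erase k, M k j * x j / x k := by
    calc z.re - M k k = (z - M k k).re := by simp
      _ ≤ ‖z - M k k‖ := Complex.re_le_norm _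
      _ ≤ _ := hk.trans_eq ?_
    refine Finset.sum_congr rfl fun j hj => ?_
    simp [abs_of_pos (hx j), abs_of_pos (hx k),
      abs_of_nonneg (hM k j (Finset.ne_of_mem_erase hj).symm)]
  have hsplit : (M *ᵥ x) k = M k k * x k + ∑ j ∈ Finset.univ.erase k, M k j * x j :=
    (Finset.add_sum_erase _ (fun j => M k j * x j) (Finset.mem_univ k)).symm
  have hMx : (M *ᵥ x) k ≤ (A *ᵥ x) k := by
    simp only [mulVec, dotProduct]
    exact Finset.sum_le_sum fun j _ => mul_le_mul_of_nonneg_right (hMA k j) (hx j).le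
  have hzx : z.re * x k ≤ (M *ᵥ x) k := by
    rw [hsplit, ← sub_le_iff_le_add', ← sub_mul, ← le_div_iff₀ (hx k), Finset.sum_div]
    exact hre
  exact neg_of_mul_neg_left (hzx.trans_lt (hMx.trans_lt (hAx k))) (hx k).le

theorem interval_hurwitz_iff_upper (Am Ap : Matrix (Fin d) (Fin d) ℝ)
    (hAm : Metzler Am) (hAp : Metzler Ap) (hle : ∀ i j, Am i j ≤ Ap i j) :
    (∀ M : Matrix (Fin d) (Fin d) ℝ,
      (∀ i j, Am i j ≤ M i j) → (∀ i j, M i j ≤ Ap i j) → IsHurwitz M)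
    ↔ IsHurwitz Ap := by
  refine ⟨fun h => h Ap hle fun _ _ => le_rfl, fun hH M hAmM hMAp => ?_⟩
  obtain ⟨x, hx, hAx⟩ := hAp.exists_pos_mulVec_neg_of_isHurwitz hH
  have hM : Metzler M := fun i j hij => (hAm i j hij).trans (hAmM i j)
  exact hM.isHurwitz_of_le_of_mulVec_neg hMAp hx hAx
end

section
/- Let A⁺ be a Metzler Hurwitz stable matrix, q ∈ ℝ^d_{>0} a strictly positive vector, and set v₊ = −(A⁺)⁻ᵀ q. For any Δ with 0 ≤ Δ ≤ A⁺ − A⁻ entrywise (where A⁻ ≤ A⁺ is Metzler and A⁺ − Δ is Hurwitz stable), the vector v(Δ) := (I + Δ(A⁺ − Δ)⁻¹)ᵀ v₊ is strictly positive and satisfies v(Δ)ᵀ(A⁺ − Δ) = v₊ᵀA⁺ < 0 componentwise. -/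
/-! With `B = Ap - Δ`, the identity `vΔᵀ B = vpᵀ Ap = -qᵀ` is pure algebra, so
`vΔᵀ = -qᵀ B⁻¹`, and everything reduces to: for a Metzler Hurwitz matrix `M`, the row vector
`-qᵀ M⁻¹` is positive. Along the path `H t = t M - (1 - t) I` from `-I` to `M`, each `H t` is
Metzler and invertible (for `t > 0` it is `t (M - s I)` with `s ≥ 0`, and `s` is no eigenvalue),
so `w t = -qᵀ (H t)⁻¹` moves continuously from `w 0 = qᵀ > 0`. It can never reach the boundary
of the positive orthant: if `w ≥ 0` and `w_i = 0`, then `(w H)_i = ∑_{j ≠ i} w_j H_{ji} ≥ 0`,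
contradicting `w H = -qᵀ`. The intermediate value theorem applied to `min_i w_i` concludes. -/

open Matrix

variable {d : ℕ}

theorem IsHurwitz.det_sub_smul_one_ne_zero {M : Matrix (Fin d) (Fin d) ℝ} (hM : IsHurwitz M)
    {s : ℝ} (hs : 0 ≤ s) : (M - s • 1).det ≠ 0 := by
  intro hdet
  refine (hM s ?_).not_ge (by simpa using hs)
  have hmap :
      scalar (Fin d) (s : ℂ) - M.map Complex.ofReal = -(M - s • 1).map Complex.ofReal := by
    ext i j
    rcases eq_or_ne i j with rfl | h <;> simp [one_apply, *]
  rw [Polynomial.IsRoot, eval_charpoly, hmap, det_neg]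
  have hdet' : ((M - s • 1).map Complex.ofReal).det = ((M - s • 1).det : ℂ) :=
    (Complex.ofRealHom.map_det _).symm
  simp [hdet', hdet]

theorem IsHurwitz.det_smul_sub_smul_one_ne_zero {M : Matrix (Fin d) (Fin d) ℝ}
    (hM : IsHurwitz M) {t : ℝ} (ht₀ : 0 ≤ t) (ht₁ : t ≤ 1) : (t • M - (1 - t) • 1).det ≠ 0 := by
  rcases ht₀.eq_or_lt with rfl | ht
  · simp [det_neg]
  · have : t • M - (1 - t) • 1 = t • (M - ((1 - t) / t) • 1) := by
      rw [smul_sub, smul_smul, mul_div_cancel₀ _ ht.ne']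
    rw [this, det_smul]
    exact mul_ne_zero (pow_ne_zero _ ht.ne')
      (hM.det_sub_smul_one_ne_zero (div_nonneg (sub_nonneg.2 ht₁) ht.le))

theorem Metzler.smul_sub_smul_one {M : Matrix (Fin d) (Fin d) ℝ} (hM : Metzler M) {t : ℝ}
    (ht : 0 ≤ t) (c : ℝ) : Metzler (t • M - c • 1) := fun i j hij => by
  simpa [one_apply_ne hij] using mul_nonneg ht (hM i j hij)

theorem Metzler.pos_of_nonneg_of_vecMul_eq_neg {M : Matrix (Fin d) (Fin d) ℝ}
    (hM : Metzler M) {w q : Fin d → ℝ} (hq : ∀ i, 0 < q i) (hw : ∀ i, 0 ≤ w i)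
    (h : w ᵥ* M = -q) (i : Fin d) : 0 < w i := by
  refine (hw i).lt_of_ne fun hi => (hq i).not_ge ?_
  have hsum : 0 ≤ ∑ j, w j * M j i := Finset.sum_nonneg fun j _ => by
    rcases eq_or_ne j i with rfl | hji
    · simp [← hi]
    · exact mul_nonneg (hw j) (hM j i hji)
  have hi' : -q i = ∑ j, w j * M j i := congrFun h.symm i
  linarith

theorem ContinuousOn.pos_of_nonneg_imp_pos {ι : Type*} [Fintype ι] {f : ℝ → ι → ℝ} {a b : ℝ}
    (hab : a ≤ b) (hf : ContinuousOn f (Set.Icc a b)) (ha : ∀ i, 0 < f a i)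
    (hpos : ∀ t ∈ Set.Icc a b, (∀ i, 0 ≤ f t i) → ∀ i, 0 < f t i) (i : ι) : 0 < f b i := by
  by_contra! hb
  have hne : (Finset.univ : Finset ι).Nonempty := ⟨i, Finset.mem_univ i⟩
  set φ : ℝ → ℝ := fun t => Finset.univ.inf' hne (f t)
  have hφ : ContinuousOn φ (Set.Icc a b) :=
    ContinuousOn.finset_inf'_apply hne fun j _ => (continuous_apply j).comp_continuousOn hf
  obtain ⟨t, ht, hφt⟩ : (0 : ℝ) ∈ φ '' Set.Icc a b :=
    intermediate_value_Icc' hab hφ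
      ⟨(Finset.inf'_le _ (Finset.mem_univ i)).trans hb,
        ((Finset.lt_inf'_iff hne).2 fun j _ => ha j).le⟩
  have hnonneg : ∀ j, 0 ≤ f t j := fun j => hφt ▸ Finset.inf'_le _ (Finset.mem_univ j)
  exact hφt.not_gt ((Finset.lt_inf'_iff hne).2 fun j _ => hpos t ht hnonneg j)

theorem Metzler.neg_vecMul_inv_pos {M : Matrix (Fin d) (Fin d) ℝ} (hM : Metzler M)
    (hH : IsHurwitz M) {q : Fin d → ℝ} (hq : ∀ i, 0 < q i) (i : Fin d) :
    0 < ((-q) ᵥ* M⁻¹) i := by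
  set H : ℝ → Matrix (Fin d) (Fin d) ℝ := fun t => t • M - (1 - t) • 1
  have hdet : ∀ t ∈ Set.Icc (0 : ℝ) 1, IsUnit (H t).det := fun t ht =>
    (hH.det_smul_sub_smul_one_ne_zero ht.1 ht.2).isUnit
  have hcont : ContinuousOn (fun t => (-q) ᵥ* (H t)⁻¹) (Set.Icc 0 1) := by
    intro t ht
    have hinv : ContinuousAt Inv.inv (H t) :=
      continuousAt_matrix_inv _ (NormedRing.inverse_continuousAt (hdet t ht).unit)
    have hHcont : Continuous H := by fun_prop
    exact (continuous_const.matrix_vecMul continuous_id).continuousAt.comp_continuousWithinAt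
      (hinv.comp_continuousWithinAt hHcont.continuousWithinAt)
  have hw₁ := hcont.pos_of_nonneg_imp_pos zero_le_one ?_ ?_ i
  · simpa [H] using hw₁
  · intro j
    have hinv : (-1 : Matrix (Fin d) (Fin d) ℝ)⁻¹ = -1 := inv_eq_left_inv (by simp)
    simpa [H, hinv, vecMul_neg] using hq j
  · intro t ht hw
    refine (hM.smul_sub_smul_one ht.1 (1 - t)).pos_of_nonneg_of_vecMul_eq_neg hq hw ?_
    rw [vecMul_vecMul, nonsing_inv_mul _ (hdet t ht), vecMul_one]

theorem robust_stability_certificate_general (Am Ap Δ : Matrix (Fin d) (Fin d) ℝ) (q : Fin d → ℝ)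
    (hAm : Metzler Am)
    (hHp : IsHurwitz Ap) (hq : ∀ i, 0 < q i)
    (hΔ2 : ∀ i j, Δ i j ≤ Ap i j - Am i j)
    (hHB : IsHurwitz (Ap - Δ)) :
    let vp : Fin d → ℝ := (-(Ap⁻¹)ᵀ) *ᵥ q
    let vΔ : Fin d → ℝ := ((1 + Δ * (Ap - Δ)⁻¹)ᵀ) *ᵥ vp
    (∀ i, 0 < vΔ i) ∧ vΔ ᵥ* (Ap - Δ) = vp ᵥ* Ap ∧ ∀ j, (vp ᵥ* Ap) j < 0 := by
  intro vp vΔ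
  have hAp : IsUnit Ap.det := by simpa using (hHp.det_sub_smul_one_ne_zero le_rfl).isUnit
  have hB : IsUnit (Ap - Δ).det := by simpa using (hHB.det_sub_smul_one_ne_zero le_rfl).isUnit
  have hvp : vp = q ᵥ* -Ap⁻¹ := by rw [← mulVec_transpose, transpose_neg]
  have hvΔ : vΔ = vp ᵥ* (1 + Δ * (Ap - Δ)⁻¹) := mulVec_transpose _ _
  have hvpAp : vp ᵥ* Ap = -q := by
    rw [hvp, vecMul_vecMul, Matrix.neg_mul, nonsing_inv_mul _ hAp, vecMul_neg, vecMul_one]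
  have hvΔB : vΔ ᵥ* (Ap - Δ) = vp ᵥ* Ap := by
    rw [hvΔ, vecMul_vecMul, add_mul, one_mul, Matrix.mul_assoc, nonsing_inv_mul _ hB, mul_one,
      sub_add_cancel]
  have hvΔq : vΔ = (-q) ᵥ* (Ap - Δ)⁻¹ := by
    rw [← hvpAp, ← hvΔB, vecMul_vecMul, mul_nonsing_inv _ hB, vecMul_one]
  have hMetzler : Metzler (Ap - Δ) := fun i j hij => by
    linarith [hAm i j hij, hΔ2 i j, sub_apply Ap Δ i j]
  refine ⟨fun i => hvΔq ▸ hMetzler.neg_vecMul_inv_pos hHB hq i, hvΔB, fun j => ?_⟩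
  simpa [hvpAp] using hq j

theorem robust_stability_certificate (Am Ap Δ : Matrix (Fin d) (Fin d) ℝ) (q : Fin d → ℝ)
    (hAm : Metzler Am) (hAp : Metzler Ap) (hle : ∀ i j, Am i j ≤ Ap i j)
    (hHp : IsHurwitz Ap) (hq : ∀ i, 0 < q i)
    (hΔ1 : ∀ i j, 0 ≤ Δ i j) (hΔ2 : ∀ i j, Δ i j ≤ Ap i j - Am i j)
    (hHB : IsHurwitz (Ap - Δ)) :
    let vp : Fin d → ℝ := (-(Ap⁻¹)ᵀ) *ᵥ q
    let vΔ : Fin d → ℝ := ((1 + Δ * (Ap - Δ)⁻¹)ᵀ) *ᵥ vp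
    (∀ i, 0 < vΔ i) ∧ vΔ ᵥ* (Ap - Δ) = vp ᵥ* Ap ∧ ∀ j, (vp ᵥ* Ap) j < 0 :=
  robust_stability_certificate_general Am Ap Δ q hAm hHp hq hΔ2 hHB
end

section
/- Let A⁻ be a Metzler Hurwitz stable matrix and suppose w₋ ∈ ℝ^d_{≥0} satisfies w₋ᵀA⁻ + e_ℓᵀ = 0 and w₋ᵀe₁ > 0. Then for any Δ ≥ 0 entrywise such that A⁻ + Δ is Metzler and Hurwitz stable, the vector w(Δ) := (A⁻(A⁻ + Δ)⁻¹)ᵀ w₋ satisfies: (i) w(Δ) ≥ w₋ ≥ 0 entrywise, (ii) w(Δ)ᵀe₁ ≥ w₋ᵀe₁ > 0, and (iii) w(Δ)ᵀ(A⁻ + Δ) + e_ℓᵀ = 0. -/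
open Matrix

variable {d : ℕ}

/-! The shift `N = P + σ • 1` of a Metzler matrix `P` is entrywise nonnegative, and Hurwitz
stability of `P` makes `t • 1 - N` invertible for every `t ≥ σ`. For large `t` the resolvent
`(t • 1 - N)⁻¹` is a Neumann series in `N`, hence nonnegative. Nonnegativity propagates downwards:
if `R = (c • 1 - N)⁻¹ ≥ 0`, then `(u • 1 - N)⁻¹ = (1 - (c - u) • R)⁻¹ * R` is again a Neumann
series for `u` slightly below `c`, and it passes to limits by continuity of the inverse. At
`t = σ` this gives `P⁻¹ ≤ 0`. The certificate then follows from
`A⁻ (A⁻ + Δ)⁻¹ = 1 - Δ (A⁻ + Δ)⁻¹` and `w(Δ)ᵀ (A⁻ + Δ) = w₋ᵀ A⁻`. -/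

open Filter Topology Set

namespace Matrix

variable {m n : Type*}

def IsNonneg {α : Type*} [Zero α] [LE α] (A : Matrix m n α) : Prop :=
  ∀ i j, 0 ≤ A i j

namespace IsNonneg

variable {α : Type*} [Semiring α] [PartialOrder α] [IsOrderedRing α]

theorem mul {l : Type*} [Fintype m] {A : Matrix l m α} {B : Matrix m n α}
    (hA : A.IsNonneg) (hB : B.IsNonneg) : (A * B).IsNonneg := fun i j =>
  Finset.sum_nonneg fun k _ => mul_nonneg (hA i k) (hB k j)

theorem one [DecidableEq n] : (1 : Matrix n n α).IsNonneg := fun i j => by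
  by_cases h : i = j <;> simp [one_apply, h]

theorem pow [Fintype n] [DecidableEq n] {A : Matrix n n α} (hA : A.IsNonneg) (k : ℕ) :
    (A ^ k).IsNonneg := by
  induction k with
  | zero => exact pow_zero A ▸ one
  | succ k ih => exact pow_succ A k ▸ ih.mul hA

theorem smul {A : Matrix m n α} (hA : A.IsNonneg) {c : α} (hc : 0 ≤ c) : (c • A).IsNonneg :=
  fun i j => mul_nonneg hc (hA i j)

theorem vecMul [Fintype m] {v : m → α} (hv : ∀ i, 0 ≤ v i) {A : Matrix m n α}
    (hA : A.IsNonneg) (j : n) : 0 ≤ (v ᵥ* A) j :=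
  Finset.sum_nonneg fun i _ => mul_nonneg (hv i) (hA i j)

end IsNonneg

theorem isClosed_setOf_isNonneg {α : Type*} [TopologicalSpace α] [Zero α] [Preorder α]
    [OrderClosedTopology α] : IsClosed {A : Matrix m n α | A.IsNonneg} := by
  simp only [IsNonneg, ofPred_forall]
  exact isClosed_iInter fun i => isClosed_iInter fun j =>
    isClosed_le continuous_const ((continuous_apply j).comp (continuous_apply i))

variable [Fintype n] [DecidableEq n]

section LinftyOpNorm

attribute [local instance] Matrix.linftyOpNormedAddCommGroup Matrix.linftyOpNormedRing
  Matrix.linftyOpNormedSpace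

theorem eventually_isNonneg_inv_one_sub_smul {X : Matrix n n ℝ} (hX : X.IsNonneg) :
    ∀ᶠ δ in 𝓝 (0 : ℝ), 0 ≤ δ → (1 - δ • X)⁻¹.IsNonneg := by
  have hsmall : ∀ᶠ δ in 𝓝 (0 : ℝ), ‖δ • X‖ < 1 := by
    have : Tendsto (fun δ : ℝ => δ • X) (𝓝 0) (𝓝 0) := by
      simpa using (tendsto_id (x := 𝓝 (0 : ℝ))).smul_const X
    exact this.norm.eventually (gt_mem_nhds (by simp))
  filter_upwards [hsmall] with δ hδ hδ0
  rw [inv_eq_right_inv (mul_neg_geom_series _ hδ)]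
  refine isClosed_setOf_isNonneg.mem_of_tendsto (summable_geometric_of_norm_lt_one hδ).hasSum
    (Eventually.of_forall fun K i j => ?_)
  rw [sum_apply]
  exact Finset.sum_nonneg fun k _ => (hX.smul hδ0).pow k i j

end LinftyOpNorm

theorem eventually_isNonneg_inv_smul_one_sub {N : Matrix n n ℝ} (hN : N.IsNonneg) :
    ∀ᶠ t : ℝ in atTop, (t • (1 : Matrix n n ℝ) - N)⁻¹.IsNonneg := by
  filter_upwards [(tendsto_inv_atTop_zero (𝕜 := ℝ)).eventually
    (eventually_isNonneg_inv_one_sub_smul hN), eventually_gt_atTop (0 : ℝ)] with t ht ht0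
  have hfac : t • (1 : Matrix n n ℝ) - N = (t • 1) * (1 - t⁻¹ • N) := by
    rw [Matrix.mul_sub, mul_one, smul_mul, one_mul, smul_smul, mul_inv_cancel₀ ht0.ne', one_smul]
  have hinv : (t • (1 : Matrix n n ℝ))⁻¹ = t⁻¹ • 1 :=
    inv_eq_left_inv (by rw [smul_mul_smul, mul_one, inv_mul_cancel₀ ht0.ne', one_smul])
  rw [hfac, mul_inv_rev, hinv]
  exact (ht (inv_nonneg.mpr ht0.le)).mul (IsNonneg.one.smul (inv_nonneg.mpr ht0.le))

theorem eventually_nhdsLT_isNonneg_inv_smul_one_sub {N : Matrix n n ℝ} {c : ℝ}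
    (hc : IsUnit (c • (1 : Matrix n n ℝ) - N).det)
    (hR : (c • (1 : Matrix n n ℝ) - N)⁻¹.IsNonneg) :
    ∀ᶠ u in 𝓝[<] c, (u • (1 : Matrix n n ℝ) - N)⁻¹.IsNonneg := by
  have hδ : Tendsto (fun u => c - u) (𝓝[<] c) (𝓝 0) := by
    simpa using ((continuous_sub_left c).tendsto c).mono_left nhdsWithin_le_nhds
  filter_upwards [hδ.eventually (eventually_isNonneg_inv_one_sub_smul hR), self_mem_nhdsWithin]
    with u hu huc
  have hfac : u • (1 : Matrix n n ℝ) - N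
      = (c • 1 - N) * (1 - (c - u) • (c • (1 : Matrix n n ℝ) - N)⁻¹) := by
    rw [Matrix.mul_sub, mul_one, Matrix.mul_smul, mul_nonsing_inv _ hc, sub_smul]
    abel
  rw [hfac, mul_inv_rev]
  exact (hu (sub_nonneg.mpr (le_of_lt huc))).mul hR

theorem isNonneg_inv_smul_one_sub {N : Matrix n n ℝ} (hN : N.IsNonneg) {s : ℝ}
    (hdet : ∀ t, s ≤ t → IsUnit (t • (1 : Matrix n n ℝ) - N).det) :
    (s • (1 : Matrix n n ℝ) - N)⁻¹.IsNonneg := by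
  obtain ⟨t₀, ht₀, hst₀⟩ := ((eventually_isNonneg_inv_smul_one_sub hN).and
    (eventually_ge_atTop s)).exists
  set S := {t : ℝ | (t • (1 : Matrix n n ℝ) - N)⁻¹.IsNonneg}
  have hcont : ContinuousOn (fun t : ℝ => (t • (1 : Matrix n n ℝ) - N)⁻¹) (Icc s t₀) := by
    intro t ht
    have hinv : ContinuousAt Ring.inverse (t • (1 : Matrix n n ℝ) - N).det := by
      rw [Ring.inverse_eq_inv']
      exact continuousAt_inv₀ (hdet t ht.1).ne_zero
    have hlin : Continuous fun u : ℝ => u • (1 : Matrix n n ℝ) - N := by fun_prop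
    exact ((continuousAt_matrix_inv _ hinv).comp (x := t) hlin.continuousAt).continuousWithinAt
  have hclosed : IsClosed (S ∩ Icc s t₀) := by
    rw [inter_comm]
    exact hcont.preimage_isClosed_of_isClosed isClosed_Icc isClosed_setOf_isNonneg
  refine hclosed.Icc_subset_of_forall_exists_lt ht₀ ?_ (left_mem_Icc.mpr hst₀)
  rintro x ⟨hxS, hx⟩ y hyx
  exact ((eventually_nhdsLT_isNonneg_inv_smul_one_sub (hdet x hx.1.le) hxS).and
    (Ico_mem_nhdsLT hyx)).exists

end Matrix

theorem IsHurwitz.isUnit_det_smul_one_sub {M : Matrix (Fin d) (Fin d) ℝ} (hM : IsHurwitz M)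
    {t : ℝ} (ht : 0 ≤ t) : IsUnit (t • (1 : Matrix (Fin d) (Fin d) ℝ) - M).det := by
  refine isUnit_iff_ne_zero.mpr fun h => ?_
  have hroot : M.charpoly.IsRoot t := by
    rwa [Polynomial.IsRoot, eval_charpoly, scalar_apply, ← smul_one_eq_diagonal]
  have hmap : (M.map Complex.ofReal).charpoly = M.charpoly.map Complex.ofRealHom :=
    charpoly_map M Complex.ofRealHom
  have := hM t (hmap ▸ hroot.map)
  rw [Complex.ofReal_re] at this
  linarith

theorem IsHurwitz.isUnit_det {M : Matrix (Fin d) (Fin d) ℝ} (hM : IsHurwitz M) :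
    IsUnit M.det := by
  have h := hM.isUnit_det_smul_one_sub le_rfl
  rwa [zero_smul, zero_sub, ← isUnit_iff_isUnit_det, IsUnit.neg_iff, isUnit_iff_isUnit_det] at h

theorem Metzler.exists_isNonneg_add_smul_one {M : Matrix (Fin d) (Fin d) ℝ} (hM : Metzler M) :
    ∃ σ : ℝ, (M + σ • 1).IsNonneg := by
  refine ⟨∑ k, |M k k|, fun i j => ?_⟩
  rcases eq_or_ne i j with rfl | hij
  · have : -M i i ≤ ∑ k, |M k k| := (neg_le_abs _).trans
      (Finset.single_le_sum (f := fun k => |M k k|) (fun _ _ => abs_nonneg _) (Finset.mem_univ i))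
    simp only [Matrix.add_apply, Matrix.smul_apply, one_apply_eq, smul_eq_mul, mul_one]
    linarith
  · simpa [one_apply_ne hij] using hM i j hij

theorem Metzler.isNonneg_neg_inv {M : Matrix (Fin d) (Fin d) ℝ} (hM : Metzler M)
    (hH : IsHurwitz M) : (-M⁻¹).IsNonneg := by
  obtain ⟨σ, hσ⟩ := hM.exists_isNonneg_add_smul_one
  have hshift : ∀ t : ℝ, t • (1 : Matrix (Fin d) (Fin d) ℝ) - (M + σ • 1) = (t - σ) • 1 - M :=
    fun t => by rw [sub_smul]; abel
  have h := isNonneg_inv_smul_one_sub hσ (s := σ) fun t ht =>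
    hshift t ▸ hH.isUnit_det_smul_one_sub (sub_nonneg.mpr ht)
  have hneg : (-M)⁻¹ = -M⁻¹ :=
    inv_eq_right_inv (by rw [neg_mul_neg, mul_nonsing_inv _ hH.isUnit_det])
  rwa [hshift, sub_self, zero_smul, zero_sub, hneg] at h

theorem robust_output_controllability_certificate_general [NeZero d]
    (Am Δ : Matrix (Fin d) (Fin d) ℝ) (wm : Fin d → ℝ) (ℓ : Fin d)
    (hwm : ∀ i, 0 ≤ wm i)
    (heq : wm ᵥ* Am + Pi.single ℓ 1 = 0)
    (hw1 : 0 < wm 0)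
    (hΔ : ∀ i j, 0 ≤ Δ i j)
    (hMz : Metzler (Am + Δ)) (hHΔ : IsHurwitz (Am + Δ)) :
    let wΔ : Fin d → ℝ := (Am * (Am + Δ)⁻¹)ᵀ *ᵥ wm
    (∀ i, wm i ≤ wΔ i) ∧ (wm 0 ≤ wΔ 0 ∧ 0 < wΔ 0) ∧
    wΔ ᵥ* (Am + Δ) + Pi.single ℓ 1 = 0 := by
  intro wΔ
  have hdet := hHΔ.isUnit_det
  have hwΔ : wΔ = wm ᵥ* (Am * (Am + Δ)⁻¹) := mulVec_transpose _ _
  have hsplit : wΔ = wm + wm ᵥ* (Δ * -(Am + Δ)⁻¹) := by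
    have hAm : Am * (Am + Δ)⁻¹ = 1 + Δ * -(Am + Δ)⁻¹ := by
      rw [Matrix.mul_neg, ← sub_eq_add_neg, ← mul_nonsing_inv (Am + Δ) hdet, ← Matrix.sub_mul,
        add_sub_cancel_right]
    rw [hwΔ, hAm, vecMul_add, vecMul_one]
  have hcorr : ∀ i, 0 ≤ (wm ᵥ* (Δ * -(Am + Δ)⁻¹)) i :=
    IsNonneg.vecMul hwm ((show Δ.IsNonneg from hΔ).mul (hMz.isNonneg_neg_inv hHΔ))
  have hle : ∀ i, wm i ≤ wΔ i := fun i => by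
    rw [hsplit, Pi.add_apply]
    exact le_add_of_nonneg_right (hcorr i)
  refine ⟨hle, ⟨hle 0, hw1.trans_le (hle 0)⟩, ?_⟩
  rwa [hwΔ, vecMul_vecMul, mul_assoc, nonsing_inv_mul _ hdet, mul_one]

theorem robust_output_controllability_certificate [NeZero d]
    (Am Δ : Matrix (Fin d) (Fin d) ℝ) (wm : Fin d → ℝ) (ℓ : Fin d)
    (hAm : Metzler Am) (hH : IsHurwitz Am)
    (hwm : ∀ i, 0 ≤ wm i)
    (heq : wm ᵥ* Am + Pi.single ℓ 1 = 0)
    (hw1 : 0 < wm 0)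
    (hΔ : ∀ i j, 0 ≤ Δ i j)
    (hMz : Metzler (Am + Δ)) (hHΔ : IsHurwitz (Am + Δ)) :
    let wΔ : Fin d → ℝ := (Am * (Am + Δ)⁻¹)ᵀ *ᵥ wm
    (∀ i, wm i ≤ wΔ i) ∧ (wm 0 ≤ wΔ 0 ∧ 0 < wΔ 0) ∧
    wΔ ᵥ* (Am + Δ) + Pi.single ℓ 1 = 0 :=
  robust_output_controllability_certificate_general Am Δ wm ℓ hwm heq hw1 hΔ hMz hHΔ
end

section
/- Let A⁻ ≤ A⁺ be Metzler matrices. The following are equivalent: (a) every M ∈ [A⁻, A⁺] is Hurwitz stable and for every M ∈ [A⁻, A⁺] there exists w ∈ ℝ^d_{≥0} with w₁ > 0 and wᵀM + e_ℓᵀ = 0; (b) there exist v₊ ∈ ℝ^d_{>0} and w₋ ∈ ℝ^d_{≥0} with v₊ᵀA⁺ < 0, w₋ᵀe₁ > 0 and w₋ᵀA⁻ + e_ℓᵀ = 0. -/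
open Matrix

variable {d : ℕ}

/-!
If `v > 0` and `vᵀM < 0` for a Metzler `M`, compare any `u` with the smallest multiple `c v`
lying above it: at an index where `u` touches `c v` the off-diagonal entries of `M` only help, so
`uᵀM ≥ r uᵀ` with `r ≥ 0` forces `c ≤ 0`, i.e. `u ≤ 0`. Applied to `|x|` for a left eigenvector `x`
this rules out eigenvalues with `re ≥ 0`; with `r = 0` it makes `u ↦ uᵀM` injective and order
reflecting, so the solution of `wᵀM = -e_ℓ` dominates the subsolution `w₋` and is nonnegative.
This gives (b) ⇒ (a), since `vᵀM ≤ v₊ᵀA⁺ < 0` on the whole interval.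

Conversely (a) at `M = A⁻` gives `w₋`, and at `M = A⁺` a Metzler Hurwitz matrix. For small `t > 0`,
`B = 1 + t A⁺` is entrywise nonnegative with spectrum in the open unit disc, so the resolvent
`(1 - zB)⁻¹` is analytic beyond `|z| = 1` and `S = ∑ Bᵏ` converges, with `S ≥ 1` and
`S (t A⁺) = S (B - 1) = -1`. Then `v₊ = 1ᵀS` is positive and `v₊ᵀA⁺ = -1/t`.
-/

open Filter Topology

lemma summable_pow_of_spectralRadius_lt_one {A : Type*} [NormedRing A] [NormedAlgebra ℂ A]
    [CompleteSpace A] {a : A} (ha : spectralRadius ℂ a < 1) : Summable (a ^ ·) := by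
  obtain ⟨r, hr1, hr⟩ := ENNReal.lt_iff_exists_nnreal_btwn.1 (ENNReal.one_lt_inv.2 ha)
  have hpow := (spectrum.hasFPowerSeriesOnBall_inverse_one_sub_smul ℂ a).exchange_radius
    ((spectrum.differentiableOn_inverse_one_sub_smul hr).hasFPowerSeriesOnBall
      (by simpa using zero_lt_one.trans hr1))
  simpa using (hpow.hasSum (y := 1) (by simpa using hr1)).summable

lemma spectrum.exists_eq_one_add_mul_of_mem {𝕜 A : Type*} [Field 𝕜] [Ring A] [Algebra 𝕜 A]
    {a : A} {t z : 𝕜} (ht : t ≠ 0) (hz : z ∈ spectrum 𝕜 (1 + t • a)) :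
    ∃ w ∈ spectrum 𝕜 a, z = 1 + t * w := by
  refine ⟨t⁻¹ * (z - 1), ?_, by field_simp; ring⟩
  rw [← sub_add_cancel z 1, ← map_one (algebraMap 𝕜 A), spectrum.add_mem_add_iff] at hz
  refine (spectrum.smul_mem_smul_iff (r := Units.mk0 t ht)).1 ?_
  simpa [Units.smul_def, ht] using hz

lemma Complex.eventually_norm_one_add_mul_lt_one {w : ℂ} (hw : w.re < 0) :
    ∀ᶠ t : ℝ in 𝓝[>] 0, ‖1 + t * w‖ < 1 := by
  have hlim : Tendsto (fun t : ℝ => 2 * w.re + t * Complex.normSq w) (𝓝 0) (𝓝 (2 * w.re)) :=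
    (by fun_prop : Continuous fun t : ℝ => 2 * w.re + t * Complex.normSq w).tendsto' _ _ (by simp)
  filter_upwards [self_mem_nhdsWithin,
    nhdsWithin_le_nhds (hlim.eventually (gt_mem_nhds (show 2 * w.re < 0 by linarith)))]
    with t ht hneg
  have hsq : ‖1 + t * w‖ ^ 2 = 1 + t * (2 * w.re + t * Complex.normSq w) := by
    rw [← Complex.normSq_eq_norm_sq]
    simp only [Complex.normSq_apply, Complex.add_re, Complex.one_re, Complex.mul_re,
      Complex.ofReal_re, Complex.ofReal_im, zero_mul, sub_zero, Complex.add_im, Complex.one_im,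
      Complex.mul_im, add_zero, zero_add]
    ring
  have : ‖1 + t * w‖ ^ 2 < 1 := by
    rw [hsq]
    linarith [mul_neg_of_pos_of_neg (Set.mem_Ioi.1 ht) hneg]
  exact (pow_lt_one_iff_of_nonneg (norm_nonneg _) two_ne_zero).1 this

namespace Matrix

variable {n : Type*} [Fintype n] [DecidableEq n]

lemma summable_pow_of_forall_norm_lt_one {B : Matrix n n ℝ}
    (hB : ∀ z ∈ spectrum ℂ (B.map Complex.ofReal), ‖z‖ < 1) : Summable (B ^ ·) := by
  let := Matrix.linftyOpNormedRing (n := n) (α := ℂ)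
  let := Matrix.linftyOpNormedAlgebra (n := n) (α := ℂ) (R := ℂ)
  have hρ : spectralRadius ℂ (B.map Complex.ofReal) < 1 := by
    rcases (spectrum ℂ (B.map Complex.ofReal)).eq_empty_or_nonempty with h | h
    · simp [spectralRadius, h]
    · exact_mod_cast spectrum.spectralRadius_lt_of_forall_lt_of_nonempty h (r := 1)
        fun z hz => by simpa [← NNReal.coe_lt_coe] using hB z hz
  have hre : Continuous fun M : Matrix n n ℂ => M.map Complex.re := by fun_prop
  convert (_root_.summable_pow_of_spectralRadius_lt_one hρ).map
    Complex.reAddGroupHom.mapMatrix hre using 2 with k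
  have : B.map Complex.ofReal ^ k = (B ^ k).map Complex.ofReal :=
    (map_pow Complex.ofRealHom.mapMatrix B k).symm
  ext
  simp [this]

lemma one_apply_le_tsum_pow_apply {B : Matrix n n ℝ} (hB : ∀ i j, 0 ≤ B i j)
    (hs : Summable (B ^ ·)) (i j : n) : (1 : Matrix n n ℝ) i j ≤ (∑' k, B ^ k) i j := by
  have hsi := Pi.summable.1 hs i
  have hentry : (∑' k, B ^ k) i j = ∑' k, (B ^ k) i j :=
    (congrFun (tsum_apply hs) j).trans (tsum_apply hsi)
  rw [hentry]
  simpa using (Pi.summable.1 hsi j).le_tsum 0 fun k _ => pow_apply_nonneg hB k i j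

lemma exists_pos_vecMul_neg_of_mul_eq_neg_one {A S : Matrix n n ℝ}
    (hS : ∀ i j, (1 : Matrix n n ℝ) i j ≤ S i j) (hSA : S * A = -1) :
    ∃ v : n → ℝ, (∀ i, 0 < v i) ∧ ∀ j, (v ᵥ* A) j < 0 := by
  refine ⟨1 ᵥ* S, fun i => ?_, fun j => by simp [vecMul_vecMul, hSA, vecMul_neg]⟩
  calc (0 : ℝ) < (1 ᵥ* (1 : Matrix n n ℝ)) i := by simp
    _ ≤ (1 ᵥ* S) i := dotProduct_le_dotProduct_of_nonneg_left (fun k => hS k i) fun _ => zero_le_one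

end Matrix

namespace Metzler

variable {M : Matrix (Fin d) (Fin d) ℝ}

lemma mono {A : Matrix (Fin d) (Fin d) ℝ} (hA : Metzler A) (h : ∀ i j, A i j ≤ M i j) :
    Metzler M :=
  fun i j hij => (hA i j hij).trans (h i j)

lemma vecMul_apply_le_of_le_of_eq (hM : Metzler M) {u w : Fin d → ℝ} (hle : ∀ j, u j ≤ w j)
    {i : Fin d} (heq : u i = w i) : (u ᵥ* M) i ≤ (w ᵥ* M) i := by
  simp only [vecMul, dotProduct]
  refine Finset.sum_le_sum fun j _ => ?_
  rcases eq_or_ne j i with rfl | hji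
  · rw [heq]
  · exact mul_le_mul_of_nonneg_right (hle j) (hM j i hji)

lemma eventually_one_add_smul_apply_nonneg (hM : Metzler M) :
    ∀ᶠ t : ℝ in 𝓝[>] 0, ∀ i j, 0 ≤ (1 + t • M) i j := by
  simp only [eventually_all]
  intro i j
  rcases eq_or_ne i j with rfl | hij
  · have hlim : Tendsto (fun t : ℝ => 1 + t * M i i) (𝓝 0) (𝓝 1) :=
      (by fun_prop : Continuous fun t : ℝ => 1 + t * M i i).tendsto' _ _ (by simp)
    filter_upwards [nhdsWithin_le_nhds (hlim.eventually (lt_mem_nhds one_pos))] with t ht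
    simpa using ht.le
  · filter_upwards [self_mem_nhdsWithin] with t ht
    simpa [hij] using mul_nonneg (Set.mem_Ioi.1 ht).le (hM i j hij)

variable {v : Fin d → ℝ}

lemma nonpos_of_smul_le_vecMul (hM : Metzler M) (hv : ∀ i, 0 < v i)
    (hvM : ∀ j, (v ᵥ* M) j < 0) {r : ℝ} (hr : 0 ≤ r) {u : Fin d → ℝ}
    (hu : ∀ j, r * u j ≤ (u ᵥ* M) j) (i : Fin d) : u i ≤ 0 := by
  have : Nonempty (Fin d) := ⟨i⟩
  obtain ⟨k, hk⟩ := Finite.exists_max fun j => u j / v j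
  set c := u k / v k
  have hle : ∀ j, u j ≤ (c • v) j := fun j => (div_le_iff₀ (hv j)).1 (hk j)
  have heq : u k = (c • v) k := (div_mul_cancel₀ _ (hv k).ne').symm
  suffices hc : c ≤ 0 from (hle i).trans (mul_nonpos_of_nonpos_of_nonneg hc (hv i).le)
  by_contra! hc
  have hcomp := vecMul_apply_le_of_le_of_eq hM hle heq
  rw [smul_vecMul, Pi.smul_apply, smul_eq_mul] at hcomp
  have huk : 0 < u k := by rw [heq]; exact mul_pos hc (hv k)
  nlinarith [hu k, hvM k, mul_nonneg hr huk.le]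

lemma le_of_vecMul_le_vecMul (hM : Metzler M) (hv : ∀ i, 0 < v i)
    (hvM : ∀ j, (v ᵥ* M) j < 0) {u w : Fin d → ℝ} (h : ∀ j, (u ᵥ* M) j ≤ (w ᵥ* M) j)
    (i : Fin d) : w i ≤ u i := by
  have := nonpos_of_smul_le_vecMul hM hv hvM le_rfl (u := w - u)
    (fun j => by simpa [sub_vecMul] using h j) i
  simpa using this

lemma det_ne_zero (hM : Metzler M) (hv : ∀ i, 0 < v i) (hvM : ∀ j, (v ᵥ* M) j < 0) :
    M.det ≠ 0 := by
  rw [Ne, ← exists_vecMul_eq_zero_iff]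
  rintro ⟨u, hu0, hu⟩
  have hle := le_of_vecMul_le_vecMul hM hv hvM (u := u) (w := 0) (by simp [hu])
  have hge := le_of_vecMul_le_vecMul hM hv hvM (u := 0) (w := u) (by simp [hu])
  exact hu0 (funext fun i => le_antisymm (hge i) (hle i))

lemma re_mul_norm_le_vecMul (hM : Metzler M) {x : Fin d → ℂ} {z : ℂ}
    (hx : x ᵥ* M.map Complex.ofReal = z • x) (j : Fin d) :
    z.re * ‖x j‖ ≤ ((‖x ·‖) ᵥ* M) j := by
  have hrow : (z - M j j) * x j = ∑ i ∈ Finset.univ.erase j, x i * M i j := by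
    have := congrFun hx j
    simp only [vecMul, dotProduct, map_apply, Pi.smul_apply, smul_eq_mul] at this
    rw [Finset.sum_erase_eq_sub (Finset.mem_univ j), this]
    ring
  have hnorm : ‖z - M j j‖ * ‖x j‖ ≤ ∑ i ∈ Finset.univ.erase j, ‖x i‖ * M i j := by
    rw [← norm_mul, hrow]
    refine (norm_sum_le _ _).trans (Finset.sum_le_sum fun i hi => ?_)
    rw [norm_mul, Complex.norm_real, Real.norm_of_nonneg (hM i j (Finset.ne_of_mem_erase hi))]
  have hre : z.re - M j j ≤ ‖z - M j j‖ := by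
    simpa using Complex.re_le_norm (z - M j j)
  calc z.re * ‖x j‖ ≤ (M j j + ‖z - M j j‖) * ‖x j‖ := by gcongr; linarith
    _ ≤ ((‖x ·‖) ᵥ* M) j := by
      rw [vecMul, dotProduct, ← Finset.add_sum_erase _ _ (Finset.mem_univ j)]
      linarith

theorem isHurwitz (hM : Metzler M) (hv : ∀ i, 0 < v i) (hvM : ∀ j, (v ᵥ* M) j < 0) :
    IsHurwitz M := by
  intro z hz
  rw [Polynomial.IsRoot, eval_charpoly, ← exists_vecMul_eq_zero_iff] at hz
  obtain ⟨x, hx0, hx⟩ := hz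
  have heig : x ᵥ* M.map Complex.ofReal = z • x := by
    rw [vecMul_sub, sub_eq_zero] at hx
    simp [← hx]
  by_contra! hre
  have hnorm := nonpos_of_smul_le_vecMul hM hv hvM hre (re_mul_norm_le_vecMul hM heig)
  exact hx0 (funext fun i => norm_le_zero_iff.1 (hnorm i))

theorem exists_pos_vecMul_neg_of_isHurwitz (hM : Metzler M) (hH : IsHurwitz M) :
    ∃ v : Fin d → ℝ, (∀ i, 0 < v i) ∧ ∀ j, (v ᵥ* M) j < 0 := by
  have hspec : ∀ᶠ t : ℝ in 𝓝[>] 0,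
      ∀ w ∈ spectrum ℂ (M.map Complex.ofReal), ‖1 + t * w‖ < 1 :=
    (finite_spectrum _).eventually_all.2 fun w hw =>
      Complex.eventually_norm_one_add_mul_lt_one (hH w (mem_spectrum_iff_isRoot_charpoly.1 hw))
  obtain ⟨t, ht : 0 < t, hB, hBspec⟩ :=
    (eventually_mem_nhdsWithin.and (hM.eventually_one_add_smul_apply_nonneg.and hspec)).exists
  set B := 1 + t • M
  have hBc : B.map Complex.ofReal = 1 + (t : ℂ) • M.map Complex.ofReal := by
    ext i j
    by_cases h : i = j <;> simp [B, one_apply, h]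
  have hsum : Summable (B ^ ·) := summable_pow_of_forall_norm_lt_one fun z hz => by
    rw [hBc] at hz
    obtain ⟨w, hw, rfl⟩ := spectrum.exists_eq_one_add_mul_of_mem (by exact_mod_cast ht.ne') hz
    exact hBspec w hw
  have hinv : (∑' k, B ^ k) * (t • M) = -1 := by
    rw [← neg_eq_iff_eq_neg, ← mul_neg, ← sub_add_cancel_left 1 (t • M)]
    exact hsum.tsum_pow_mul_one_sub
  obtain ⟨v, hv, hvM⟩ :=
    exists_pos_vecMul_neg_of_mul_eq_neg_one (one_apply_le_tsum_pow_apply hB hsum) hinv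
  refine ⟨v, hv, fun j => neg_of_mul_neg_right ?_ ht.le⟩
  simpa [vecMul_smul] using hvM j

end Metzler

theorem robust_ergodicity_iff [NeZero d] (Am Ap : Matrix (Fin d) (Fin d) ℝ) (ℓ : Fin d)
    (hAm : Metzler Am) (hAp : Metzler Ap) (hle : ∀ i j, Am i j ≤ Ap i j) :
    (∀ M : Matrix (Fin d) (Fin d) ℝ,
        (∀ i j, Am i j ≤ M i j) → (∀ i j, M i j ≤ Ap i j) →
        IsHurwitz M ∧
          ∃ w : Fin d → ℝ, (∀ i, 0 ≤ w i) ∧ 0 < w 0 ∧ w ᵥ* M + Pi.single ℓ 1 = 0)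
    ↔ (∃ vp wm : Fin d → ℝ, (∀ i, 0 < vp i) ∧ (∀ i, 0 ≤ wm i) ∧
        (∀ j, (vp ᵥ* Ap) j < 0) ∧ 0 < wm 0 ∧ wm ᵥ* Am + Pi.single ℓ 1 = 0) := by
  constructor
  · intro h
    obtain ⟨hHp, -⟩ := h Ap hle fun _ _ => le_rfl
    obtain ⟨-, wm, hwm, hwm0, hwmA⟩ := h Am (fun _ _ => le_rfl) hle
    obtain ⟨vp, hvp, hvpA⟩ := hAp.exists_pos_vecMul_neg_of_isHurwitz hHp
    exact ⟨vp, wm, hvp, hwm, hvpA, hwm0, hwmA⟩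
  · rintro ⟨vp, wm, hvp, hwm, hvpA, hwm0, hwmA⟩ M hAmM hMAp
    have hM := hAm.mono hAmM
    have hvpM : ∀ j, (vp ᵥ* M) j < 0 := fun j =>
      (dotProduct_le_dotProduct_of_nonneg_left (fun i => hMAp i j) fun i => (hvp i).le).trans_lt
        (hvpA j)
    set w := -Pi.single ℓ 1 ᵥ* M⁻¹
    have hwM : w ᵥ* M + Pi.single ℓ 1 = 0 := by
      have hdet := isUnit_iff_ne_zero.2 (hM.det_ne_zero hvp hvpM)
      simp [w, vecMul_vecMul, nonsing_inv_mul _ hdet]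
    have hwmw : ∀ i, wm i ≤ w i := hM.le_of_vecMul_le_vecMul hvp hvpM fun j => by
      have hA := congrFun hwmA j
      have hw := congrFun hwM j
      simp only [Pi.add_apply, Pi.zero_apply] at hA hw
      have hmono : (wm ᵥ* Am) j ≤ (wm ᵥ* M) j :=
        dotProduct_le_dotProduct_of_nonneg_left (fun i => hAmM i j) hwm
      linarith
    exact ⟨hM.isHurwitz hvp hvpM, w, fun i => (hwm i).trans (hwmw i), hwm0.trans_le (hwmw 0), hwM⟩
end

section
/- Let M be a Metzler matrix and i, j ∈ {1,…,d}. Then the row vector [e_jᵀe_i, e_jᵀMe_i, …, e_jᵀM^{d−1}e_i] is nonzero (i.e., e_jᵀM^k e_i ≠ 0 for some 0 ≤ k ≤ d−1) if and only if there is a directed path from node i to node j (or i = j) in the directed graph G_M on vertices {1,…,d} with an edge from m to n whenever m ≠ n and e_nᵀMe_m ≠ 0. -/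
open Matrix

variable {d : ℕ}

/-!
A nonzero entry `(M ^ k) j i` contains a nonzero product of entries along a walk from `i` to `j`,
and dropping the diagonal steps of that walk leaves a path in the graph. Conversely, adding a
scalar `c` to a Metzler matrix makes it entrywise nonnegative without changing the graph, so a
path from `i` to `j` makes the entry `(j, i)` of some power `(M + c) ^ k` positive. That power is
a polynomial in `M`, and by Cayley–Hamilton every power of `M` is a combination of `M ^ m` with
`m < d`; so the entries `(M ^ m) j i`, `m < d`, cannot all vanish.
-/

open Polynomial

namespace Matrix

variable {n R : Type*} [Fintype n] [DecidableEq n] {i j : n}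

theorem aeval_apply_eq_zero_of_pow_apply_eq_zero [CommSemiring R] (A : Matrix n n R) {N : ℕ}
    {p : R[X]} (hp : p.natDegree < N) (h : ∀ k < N, (A ^ k) i j = 0) :
    aeval A p i j = 0 := by
  rw [aeval_eq_sum_range' hp, sum_apply]
  exact Finset.sum_eq_zero fun k hk => by
    rw [smul_apply, h k (Finset.mem_range.mp hk), smul_zero]

theorem add_scalar_pow_apply_eq_zero [CommSemiring R] (A : Matrix n n R)
    (h : ∀ k, (A ^ k) i j = 0) (c : R) (k : ℕ) : ((A + scalar n c) ^ k) i j = 0 := by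
  have hpoly : (A + scalar n c) ^ k = aeval A ((X + C c) ^ k) := by
    simp [Algebra.algebraMap_eq_smul_one, smul_one_eq_diagonal]
  rw [hpoly]
  exact aeval_apply_eq_zero_of_pow_apply_eq_zero A (Nat.lt_succ_self _) fun m _ => h m

theorem pow_apply_eq_zero_of_forall_lt_card [CommRing R] [Nontrivial R] (A : Matrix n n R)
    (h : ∀ k < Fintype.card n, (A ^ k) i j = 0) (k : ℕ) : (A ^ k) i j = 0 := by
  have hne : A.charpoly ≠ 1 := fun h1 => by
    have hcard := A.charpoly_natDegree_eq_dim
    rw [h1, natDegree_one] at hcard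
    have : Nonempty n := ⟨i⟩
    exact Fintype.card_ne_zero hcard.symm
  rw [pow_eq_aeval_mod_charpoly]
  exact aeval_apply_eq_zero_of_pow_apply_eq_zero A
    ((natDegree_modByMonic_lt _ A.charpoly_monic hne).trans_eq A.charpoly_natDegree_eq_dim) h

theorem exists_pow_apply_pos_of_reflTransGen [Semiring R] [PartialOrder R]
    [IsStrictOrderedRing R] {A : Matrix n n R} (hA : ∀ a b, 0 ≤ A a b)
    (h : Relation.ReflTransGen (fun a b => A b a ≠ 0) i j) : ∃ k, 0 < (A ^ k) j i := by
  induction h with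
  | refl => exact ⟨0, by simp⟩
  | @tail b c _ hbc ih =>
    obtain ⟨k, hk⟩ := ih
    refine ⟨k + 1, ?_⟩
    rw [pow_succ', mul_apply]
    exact Finset.sum_pos' (fun m _ => mul_nonneg (hA c m) (pow_apply_nonneg hA k m i))
      ⟨b, Finset.mem_univ b, mul_pos ((hA c b).lt_of_ne' hbc) hk⟩

end Matrix

theorem reflTransGen_edgeRel_of_pow_apply_ne_zero {M : Matrix (Fin d) (Fin d) ℝ} {i j : Fin d}
    {k : ℕ} (h : (M ^ k) j i ≠ 0) : Relation.ReflTransGen (edgeRel M) i j := by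
  induction k generalizing j with
  | zero =>
    obtain rfl : i = j := by by_contra hij; simp [one_apply_ne' hij] at h
    exact .refl
  | succ k ih =>
    rw [pow_succ', mul_apply] at h
    obtain ⟨m, -, hm⟩ := Finset.exists_ne_zero_of_sum_ne_zero h
    rcases eq_or_ne m j with rfl | hmj
    · exact ih (right_ne_zero_of_mul hm)
    · exact (ih (right_ne_zero_of_mul hm)).tail ⟨hmj, left_ne_zero_of_mul hm⟩

theorem Metzler.exists_add_scalar_nonneg {M : Matrix (Fin d) (Fin d) ℝ} (hM : Metzler M) :
    ∃ c : ℝ, ∀ a b, 0 ≤ (M + scalar (Fin d) c) a b := by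
  refine ⟨∑ v, |M v v|, fun a b => ?_⟩
  rcases eq_or_ne a b with rfl | hab
  · have hle : |M a a| ≤ ∑ v, |M v v| :=
      Finset.single_le_sum (f := fun v => |M v v|) (fun v _ => abs_nonneg _) (Finset.mem_univ a)
    simp only [Matrix.add_apply, scalar_apply, diagonal_apply_eq]
    linarith [neg_abs_le (M a a)]
  · simp only [Matrix.add_apply, scalar_apply, diagonal_apply_ne _ hab, add_zero]
    exact hM a b hab

theorem edgeRel.add_scalar_apply_ne_zero {M : Matrix (Fin d) (Fin d) ℝ} {a b : Fin d}
    (h : edgeRel M a b) (c : ℝ) : (M + scalar (Fin d) c) b a ≠ 0 := by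
  simpa [h.1.symm] using h.2

theorem output_controllability_iff_path (M : Matrix (Fin d) (Fin d) ℝ)
    (hM : Metzler M) (i j : Fin d) :
    (∃ k, k < d ∧ (M ^ k) j i ≠ 0) ↔
      (i = j ∨ Relation.TransGen (edgeRel M) i j) := by
  rw [eq_comm, ← Relation.reflTransGen_iff_eq_or_transGen]
  refine ⟨fun ⟨k, _, hk⟩ => reflTransGen_edgeRel_of_pow_apply_ne_zero hk, fun hpath => ?_⟩
  by_contra! hzero
  obtain ⟨c, hc⟩ := hM.exists_add_scalar_nonneg
  obtain ⟨k, hk⟩ := exists_pow_apply_pos_of_reflTransGen hc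
    (Relation.ReflTransGen.mono (fun _ _ hab => edgeRel.add_scalar_apply_ne_zero hab c) _ _ hpath)
  have hall : ∀ k, (M ^ k) j i = 0 :=
    pow_apply_eq_zero_of_forall_lt_card M (by simpa using hzero)
  exact hk.ne' (add_scalar_pow_apply_eq_zero M hall c k)
end

section
/- Let Σ be a d×d Metzler sign-matrix (entries in {0, ⊕, ⊖} with off-diagonal entries in {0, ⊕}). The following are equivalent: (a) every real matrix M with sgn(M) = sgn(Σ) entrywise is Hurwitz stable; (b) the matrix sgn(Σ) (with entries in {−1, 0, 1}) is Hurwitz stable; (c) all diagonal entries of Σ are ⊖ and the directed graph G_Σ (vertices {1,…,d}, edge (m,n) iff m ≠ n and Σ_{nm} ≠ 0) is acyclic. -/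
open Matrix

variable {d : ℕ}

/-!
If `G_Σ` is acyclic, a vertex of the support of an eigenvector of `M ∈ Q(Σ)` without
predecessors in that support sees only the diagonal in its row of `M v = λ v`, so every
eigenvalue is a diagonal entry; this gives (c) ⇒ (a), and (a) ⇒ (b) is trivial.

For (b) ⇒ (c): a Metzler matrix `M` with `M v ≥ 0` for some nonzero `v ≥ 0` is never Hurwitz.
For large `c`, `B = M + c` is entrywise nonnegative with `B v ≥ c v`, so `‖Bᵏ‖ ≥ cᵏ` and, by
Gelfand's formula, `B` has an eigenvalue of modulus at least `c`; but if `M` were Hurwitz,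
every eigenvalue `λ + c` of `B` would satisfy `|λ + c| < c` once `c` is large. A nonnegative
diagonal entry `Σᵢᵢ` yields such a `v = eᵢ`, a cycle of `G_Σ` the indicator of the vertices
lying on cycles.
-/

open Filter Polynomial
open scoped NNReal ENNReal

lemma Relation.TransGen.exists_pred_of_self {α : Type*} {r : α → α → Prop} {a : α}
    (h : Relation.TransGen r a a) : ∃ b, r b a ∧ Relation.TransGen r b b := by
  obtain ⟨b, hab, hba⟩ := Relation.TransGen.tail'_iff.mp h
  exact ⟨b, hba, .head' hba hab⟩

lemma wellFounded_of_not_transGen_self {α : Type*} [Finite α] {r : α → α → Prop}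
    (h : ∀ a, ¬ Relation.TransGen r a a) : WellFounded r :=
  have : IsTrans α (Relation.TransGen r) := ⟨fun _ _ _ => .trans⟩
  have : Std.Irrefl (Relation.TransGen r) := ⟨h⟩
  Subrelation.wf Relation.TransGen.single (Finite.wellFounded_of_trans_of_irrefl _)

lemma Matrix.exists_eq_diag_of_isRoot_charpoly {n K : Type*} [Fintype n] [DecidableEq n] [Field K]
    {A : Matrix n n K} {r : n → n → Prop} (hr : WellFounded r)
    (hA : ∀ i j, i ≠ j → A i j ≠ 0 → r j i) {z : K} (hz : A.charpoly.IsRoot z) :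
    ∃ i, z = A i i := by
  rw [IsRoot, eval_charpoly, ← exists_mulVec_eq_zero_iff] at hz
  obtain ⟨v, hv0, hv⟩ := hz
  have hAv : A *ᵥ v = z • v := by
    ext i
    simpa [sub_mulVec, sub_eq_zero, eq_comm] using congrFun hv i
  obtain ⟨i, hi, hmin⟩ := hr.has_min {j | v j ≠ 0} (Function.ne_iff.mp hv0)
  refine ⟨i, mul_right_cancel₀ hi ?_⟩
  have hrow : (A *ᵥ v) i = A i i * v i := by
    refine Finset.sum_eq_single i (fun j _ hji => ?_) (by simp)
    by_cases hAij : A i j = 0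
    · simp [hAij]
    · simp [not_not.mp fun hj => hmin j hj (hA i j (Ne.symm hji) hAij)]
  rwa [hAv, Pi.smul_apply, smul_eq_mul] at hrow

lemma Real.neg_of_sign_eq_neg_one {r : ℝ} (h : Real.sign r = -1) : r < 0 := by
  rcases lt_trichotomy r 0 with hr | rfl | hr
  · exact hr
  · norm_num [Real.sign_zero] at h
  · norm_num [Real.sign_of_pos hr] at h

lemma edgeRel_eq_of_sign_eq {M S : Matrix (Fin d) (Fin d) ℝ}
    (h : ∀ i j, Real.sign (M i j) = S i j) : edgeRel M = edgeRel S := by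
  ext m n
  simp only [edgeRel, ← h n m, ne_eq, Real.sign_eq_zero_iff]

lemma isHurwitz_of_acyclic {M : Matrix (Fin d) (Fin d) ℝ}
    (hacyc : ∀ m, ¬ Relation.TransGen (edgeRel M) m m) (hdiag : ∀ i, M i i < 0) :
    IsHurwitz M := by
  intro z hz
  obtain ⟨i, rfl⟩ := Matrix.exists_eq_diag_of_isRoot_charpoly
    (wellFounded_of_not_transGen_self hacyc)
    (fun i j hij hMij => ⟨hij.symm, by simpa using hMij⟩) hz
  simpa using hdiag i

lemma Complex.eventually_norm_add_lt {z : ℂ} (hz : z.re < 0) :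
    ∀ᶠ c : ℝ in atTop, ‖z + c‖ < c := by
  filter_upwards [eventually_gt_atTop (‖z‖ ^ 2 / (-2 * z.re)), eventually_gt_atTop 0]
    with c hc hc0
  have hsq : ‖z + c‖ ^ 2 = c ^ 2 + 2 * c * z.re + ‖z‖ ^ 2 := by
    simp only [Complex.sq_norm, Complex.normSq_apply, Complex.add_re, Complex.add_im,
      Complex.ofReal_re, Complex.ofReal_im, add_zero]
    ring
  have hc' : ‖z‖ ^ 2 < -2 * z.re * c := by rwa [div_lt_iff₀' (by linarith)] at hc
  exact (pow_lt_pow_iff_left₀ (norm_nonneg _) hc0.le two_ne_zero).mp (by nlinarith)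

lemma spectrum.le_spectralRadius_of_le_nnnorm_pow {A : Type*} [NormedRing A]
    [NormedAlgebra ℂ A] [CompleteSpace A] (a : A) {c : ℝ≥0} (h : ∀ n, c ^ n ≤ ‖a ^ n‖₊) :
    (c : ℝ≥0∞) ≤ spectralRadius ℂ a := by
  refine ge_of_tendsto (spectrum.pow_nnnorm_pow_one_div_tendsto_nhds_spectralRadius a) ?_
  filter_upwards [eventually_ne_atTop 0] with n hn
  calc (c : ℝ≥0∞) = ((c ^ n : ℝ≥0) : ℝ≥0∞) ^ (1 / n : ℝ) := by
        rw [ENNReal.coe_pow, ← ENNReal.rpow_natCast, ← ENNReal.rpow_mul,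
          mul_one_div_cancel (by exact_mod_cast hn), ENNReal.rpow_one]
    _ ≤ (‖a ^ n‖₊ : ℝ≥0∞) ^ (1 / n : ℝ) := by gcongr; exact h n

namespace Matrix

variable {n : Type*} [Fintype n]

lemma mulVec_mono_of_nonneg {m : Type*} {B : Matrix m n ℝ} (hB : ∀ i j, 0 ≤ B i j)
    {u w : n → ℝ} (h : u ≤ w) : B *ᵥ u ≤ B *ᵥ w :=
  fun i => Finset.sum_le_sum fun j _ => mul_le_mul_of_nonneg_left (h j) (hB i j)

lemma pow_smul_le_pow_mulVec [DecidableEq n] {B : Matrix n n ℝ} (hB : ∀ i j, 0 ≤ B i j)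
    {v : n → ℝ} {c : ℝ} (hc : 0 ≤ c) (hBv : c • v ≤ B *ᵥ v) :
    ∀ k : ℕ, c ^ k • v ≤ (B ^ k) *ᵥ v
  | 0 => by simp
  | k + 1 => calc
      c ^ (k + 1) • v = c ^ k • (c • v) := by rw [pow_succ, mul_smul]
      _ ≤ c ^ k • (B *ᵥ v) := smul_le_smul_of_nonneg_left hBv (pow_nonneg hc k)
      _ = B *ᵥ (c ^ k • v) := (mulVec_smul ..).symm
      _ ≤ B *ᵥ ((B ^ k) *ᵥ v) := mulVec_mono_of_nonneg hB (pow_smul_le_pow_mulVec hB hc hBv k)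
      _ = (B ^ (k + 1)) *ᵥ v := by rw [pow_succ', mulVec_mulVec]

end Matrix

section LinftyOpNorm

attribute [local instance] Matrix.linftyOpNormedRing Matrix.linftyOpNormedAlgebra

lemma Matrix.le_linfty_opNorm_map_ofReal {n : Type*} [Fintype n] [DecidableEq n]
    {X : Matrix n n ℝ} {v : n → ℝ} (hv : 0 ≤ v) (hv0 : v ≠ 0) {t : ℝ} (ht : 0 ≤ t)
    (h : t • v ≤ X *ᵥ v) : t ≤ ‖X.map Complex.ofReal‖ := by
  set w : n → ℂ := Complex.ofReal ∘ v
  have hw : 0 < ‖w‖ := norm_pos_iff.mpr fun hw => hv0 (funext fun i => by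
    simpa [w] using congrFun hw i)
  have hXw : ‖(t : ℂ) • w‖ ≤ ‖X.map Complex.ofReal *ᵥ w‖ := by
    refine (pi_norm_le_iff_of_nonneg (norm_nonneg _)).mpr fun i => ?_
    refine le_trans ?_ (norm_le_pi_norm _ i)
    have hi : (X.map Complex.ofReal *ᵥ w) i = ((X *ᵥ v) i : ℂ) :=
      (RingHom.map_mulVec Complex.ofRealHom X v i).symm
    simp only [hi, Pi.smul_apply, Function.comp_apply, smul_eq_mul, w, ← Complex.ofReal_mul,
      Complex.norm_real, Real.norm_eq_abs]
    exact abs_le_abs_of_nonneg (mul_nonneg ht (hv i)) (h i)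
  rw [norm_smul, Complex.norm_real, Real.norm_of_nonneg ht] at hXw
  exact le_of_mul_le_mul_right (hXw.trans (linfty_opNorm_mulVec _ _)) hw

lemma not_isHurwitz_of_mulVec_nonneg {M : Matrix (Fin d) (Fin d) ℝ} (hM : Metzler M)
    {v : Fin d → ℝ} (hv : 0 ≤ v) (hv0 : v ≠ 0) (hMv : 0 ≤ M *ᵥ v) : ¬ IsHurwitz M := by
  intro hH
  set N := M.map Complex.ofReal
  obtain ⟨c, hc0, hcM, hcN⟩ : ∃ c : ℝ, 0 ≤ c ∧ (∀ i, -M i i ≤ c) ∧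
      ∀ z ∈ spectrum ℂ N, ‖z + c‖ < c := by
    have hdiag : ∀ᶠ c : ℝ in atTop, ∀ i, -M i i ≤ c :=
      eventually_all.2 fun i => eventually_ge_atTop _
    have hspec : ∀ᶠ c : ℝ in atTop, ∀ z ∈ spectrum ℂ N, ‖z + c‖ < c :=
      (eventually_all_finite N.finite_spectrum).2 fun z hz =>
        Complex.eventually_norm_add_lt (hH z (Matrix.mem_spectrum_iff_isRoot_charpoly.1 hz))
    exact ((eventually_ge_atTop 0).and (hdiag.and hspec)).exists
  set B : Matrix (Fin d) (Fin d) ℝ := c • 1 + M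
  have hB : ∀ i j, 0 ≤ B i j := by
    intro i j
    rcases eq_or_ne i j with rfl | hij
    · simpa [B] using neg_le_iff_add_nonneg.mp (hcM i)
    · simpa [B, Matrix.one_apply_ne hij] using hM i j hij
  have hBv : c • v ≤ B *ᵥ v := by
    simpa [B, Matrix.add_mulVec, Matrix.smul_mulVec] using hMv
  have hBN : B.map Complex.ofReal = algebraMap ℂ _ (c : ℂ) + N := by
    simp [B, N, Matrix.map_add, Matrix.map_smul, Algebra.algebraMap_eq_smul_one]
  obtain ⟨i₀, -⟩ := Function.ne_iff.mp hv0
  have : Nonempty (Fin d) := ⟨i₀⟩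
  obtain ⟨z, hz, hzρ⟩ := spectrum.exists_nnnorm_eq_spectralRadius_of_nonempty
    (spectrum.nonempty (B.map Complex.ofReal))
  lift c to ℝ≥0 using hc0
  have hcz : c ≤ ‖z‖₊ := by
    have := spectrum.le_spectralRadius_of_le_nnnorm_pow (B.map Complex.ofReal)
      (c := c) fun k => by
        rw [← NNReal.coe_le_coe, NNReal.coe_pow, coe_nnnorm,
          ← show (B ^ k).map Complex.ofReal = B.map Complex.ofReal ^ k from
            B.map_pow Complex.ofRealHom k]
        exact Matrix.le_linfty_opNorm_map_ofReal hv hv0 (pow_nonneg c.2 k)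
          (Matrix.pow_smul_le_pow_mulVec hB c.2 hBv k)
    rwa [← hzρ, ENNReal.coe_le_coe] at this
  rw [hBN, ← sub_add_cancel z (c : ℂ), spectrum.add_mem_add_iff] at hz
  simpa using (hcN _ hz).trans_le hcz

end LinftyOpNorm

lemma Metzler.sum_le_mulVec {M : Matrix (Fin d) (Fin d) ℝ} (hM : Metzler M) {v : Fin d → ℝ}
    (hv : 0 ≤ v) {i : Fin d} {s : Finset (Fin d)} (hi : i ∈ s) :
    ∑ j ∈ s, M i j * v j ≤ (M *ᵥ v) i :=
  Finset.sum_le_sum_of_subset_of_nonneg (Finset.subset_univ s) fun j _ hj =>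
    mul_nonneg (hM i j (ne_of_mem_of_not_mem hi hj)) (hv j)

lemma not_isHurwitz_of_diag_nonneg {M : Matrix (Fin d) (Fin d) ℝ} (hM : Metzler M) {i : Fin d}
    (hi : 0 ≤ M i i) : ¬ IsHurwitz M := by
  refine not_isHurwitz_of_mulVec_nonneg hM (v := Pi.single i 1) (Pi.single_nonneg.2 zero_le_one)
    (by simp) ?_
  rw [Matrix.mulVec_single_one]
  intro j
  rcases eq_or_ne j i with rfl | hji
  · exact hi
  · exact hM j i hji

lemma not_isHurwitz_of_transGen_self {M : Matrix (Fin d) (Fin d) ℝ} (hM : Metzler M)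
    (hedge : ∀ i j, edgeRel M j i → -M i i ≤ M i j) {m : Fin d}
    (hm : Relation.TransGen (edgeRel M) m m) : ¬ IsHurwitz M := by
  set C := {i | Relation.TransGen (edgeRel M) i i}
  have hv : 0 ≤ C.indicator (1 : Fin d → ℝ) := Set.indicator_nonneg fun _ _ => zero_le_one
  refine not_isHurwitz_of_mulVec_nonneg hM hv
    (fun h => by simpa [C, hm] using congrFun h m) fun i => ?_
  by_cases hi : i ∈ C
  · obtain ⟨j, hji, hj⟩ := Relation.TransGen.exists_pred_of_self hi
    calc 0 ≤ M i i + M i j := by linarith [hedge i j hji]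
      _ = ∑ k ∈ {i, j}, M i k * C.indicator 1 k := by
          rw [Finset.sum_pair hji.1.symm]
          simp [hi, show j ∈ C from hj]
      _ ≤ (M *ᵥ C.indicator 1) i := hM.sum_le_mulVec hv (by simp)
  · calc 0 = ∑ k ∈ {i}, M i k * C.indicator 1 k := by simp [hi]
      _ ≤ (M *ᵥ C.indicator 1) i := hM.sum_le_mulVec hv (by simp)

lemma neg_diag_le_of_edgeRel {S : Matrix (Fin d) (Fin d) ℝ}
    (hsgn : ∀ i j, S i j = -1 ∨ S i j = 0 ∨ S i j = 1) (hS : Metzler S) {i j : Fin d}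
    (hji : edgeRel S j i) : -S i i ≤ S i j := by
  have hdiag : -1 ≤ S i i := by rcases hsgn i i with h | h | h <;> rw [h] <;> norm_num
  have hedge : S i j = 1 := by
    rcases hsgn i j with h | h | h
    · linarith [hS i j hji.1.symm]
    · exact absurd h hji.2
    · exact h
  linarith

theorem sign_stability_iff (S : Matrix (Fin d) (Fin d) ℝ)
    (hsgn : ∀ i j, S i j = -1 ∨ S i j = 0 ∨ S i j = 1)
    (hMz : ∀ i j, i ≠ j → 0 ≤ S i j) :
    ((∀ M : Matrix (Fin d) (Fin d) ℝ,
        (∀ i j, Real.sign (M i j) = S i j) → IsHurwitz M) ↔ IsHurwitz S)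
    ∧ (IsHurwitz S ↔
        ((∀ i, S i i = -1) ∧ ∀ m, ¬ Relation.TransGen (edgeRel S) m m)) := by
  have hSS : ∀ i j, Real.sign (S i j) = S i j := fun i j => by
    rcases hsgn i j with h | h | h <;> rw [h]
    exacts [Real.sign_of_neg (by norm_num), Real.sign_zero, Real.sign_of_pos one_pos]
  have hbc : IsHurwitz S → (∀ i, S i i = -1) ∧ ∀ m, ¬ Relation.TransGen (edgeRel S) m m := by
    intro hS
    refine ⟨fun i => ?_, fun m hm =>
      not_isHurwitz_of_transGen_self hMz (fun i j => neg_diag_le_of_edgeRel hsgn hMz) hm hS⟩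
    rcases hsgn i i with h | h | h
    · exact h
    all_goals exact absurd hS (not_isHurwitz_of_diag_nonneg hMz (i := i) (by norm_num [h]))
  have hca : ((∀ i, S i i = -1) ∧ ∀ m, ¬ Relation.TransGen (edgeRel S) m m) →
      ∀ M : Matrix (Fin d) (Fin d) ℝ, (∀ i j, Real.sign (M i j) = S i j) → IsHurwitz M := by
    rintro ⟨hdiag, hacyc⟩ M hM
    rw [← edgeRel_eq_of_sign_eq hM] at hacyc
    exact isHurwitz_of_acyclic hacyc fun i =>
      Real.neg_of_sign_eq_neg_one ((hM i i).trans (hdiag i))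
  exact ⟨⟨fun h => h S hSS, fun h => hca (hbc h)⟩, hbc, fun h => hca h S hSS⟩
end
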